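/- Fix λ ≥ 1, let R = 2^λ and M = R/2. For s ∈ ℂ^R, the design matrix S(s) is a scaled unitary matrix with S(s)ᴴ S(s) = (Σ_{i=0}^{R−1} |s_i|²) · I_R if and only if for every nonzero e ∈ {1,...,M−1} one has Σ_{m=0}^{M−1} ( conj(s_m) s_{m⊕e} + conj(s_{M+m}) s_{M+(m⊕e)} ) = 0. (In particular, for R = 4 the condition reads Re(conj(s_0) s_1 + conj(s_2) s_3) = 0, which is the scaled-unitarity condition on the signal set for the 4-relay code.) -/

import Mathlib

/-!
The XOR-circulant matrices `i, j ↦ c (i ⊕ j)` form a commutative algebra closed under `ᴴ`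
(reindexing sums by `k ↦ k ⊕ i`). Hence `S(s) = [[C, -Dᴴ], [D, Cᴴ]]` behaves like a quaternion
`z + w j` with commuting normal entries, and `S(s)ᴴ S(s) = diag(G, G)` with
`G = CᴴC + DᴴD`. This `G` is itself XOR-circulant, with first row the autocorrelation
`e ↦ Σ_m (conj(s_m) s_{m⊕e} + conj(s_{M+m}) s_{M+(m⊕e)})`, whose value at `0` is `Σ_i |s_i|²`.
So `S(s)ᴴ S(s)` is that multiple of the identity exactly when the autocorrelation vanishes off `0`.
-/

open Matrix

namespace DDSTC

/-- Index type `{0, ..., M-1}` with `M = 2^(λ-1)` (so `R = 2^λ = 2*M`,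
and `R×R` matrices are indexed by `Idx lam ⊕ Idx lam`). -/
abbrev Idx (lam : ℕ) := Fin (2 ^ (lam - 1))

/-- Bitwise XOR `⊕` on `{0, ..., 2^(λ-1) - 1}`. -/
def fx {lam : ℕ} (i j : Idx lam) : Idx lam :=
  ⟨i.val ^^^ j.val, Nat.xor_lt_two_pow i.isLt j.isLt⟩

/-- The matrix `P_k ∈ M_M(ℂ)`, with `(P_k)_{ij} = 1` if `j = i ⊕ k` and `0` otherwise. -/
def P {lam : ℕ} (k : Idx lam) : Matrix (Idx lam) (Idx lam) ℂ :=
  Matrix.of fun i j => if j = fx i k then 1 else 0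

/-- The `R×R` design matrix `S(s) = [[C(s), -conj(D(s))], [D(s), conj(C(s))]]`
where `C(s)_{ij} = s_{i⊕j}` and `D(s)_{ij} = s_{M+(i⊕j)}`. -/
def Sdes {lam : ℕ} (s : Idx lam ⊕ Idx lam → ℂ) :
    Matrix (Idx lam ⊕ Idx lam) (Idx lam ⊕ Idx lam) ℂ :=
  Matrix.fromBlocks
    (Matrix.of fun i j => s (Sum.inl (fx i j)))
    (-(Matrix.of fun i j => starRingEnd ℂ (s (Sum.inr (fx i j)))))
    (Matrix.of fun i j => s (Sum.inr (fx i j)))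
    (Matrix.of fun i j => starRingEnd ℂ (s (Sum.inl (fx i j))))

/-- The relay matrices: `A_k = [[P_k, 0], [0, P_k]]` for `0 ≤ k < M` (index `Sum.inl k`)
and `A_{M+k} = [[0, -P_k], [P_k, 0]]` for `0 ≤ k < M` (index `Sum.inr k`). -/
def Arel {lam : ℕ} : Idx lam ⊕ Idx lam → Matrix (Idx lam ⊕ Idx lam) (Idx lam ⊕ Idx lam) ℂ
  | Sum.inl k => Matrix.fromBlocks (P k) 0 0 (P k)
  | Sum.inr k => Matrix.fromBlocks 0 (-(P k)) (P k) 0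

section Xor

variable {lam : ℕ}

lemma fx_comm (i j : Idx lam) : fx i j = fx j i :=
  Fin.ext (Nat.xor_comm _ _)

lemma fx_assoc (a b c : Idx lam) : fx (fx a b) c = fx a (fx b c) :=
  Fin.ext (Nat.xor_assoc _ _ _)

@[simp] lemma fx_zero (i : Idx lam) : fx i 0 = i :=
  Fin.ext (Nat.xor_zero _)

@[simp] lemma zero_fx (i : Idx lam) : fx 0 i = i :=
  Fin.ext (Nat.zero_xor _)

@[simp] lemma fx_self (i : Idx lam) : fx i i = 0 :=
  Fin.ext (Nat.xor_self _)

@[simp] lemma fx_eq_zero_iff {i j : Idx lam} : fx i j = 0 ↔ i = j := by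
  simp [fx, Fin.ext_iff]

@[simp] lemma fx_fx_cancel_left (i j : Idx lam) : fx i (fx i j) = j := by
  rw [← fx_assoc, fx_self, zero_fx]

lemma fx_involutive (i : Idx lam) : Function.Involutive (fx i) :=
  fx_fx_cancel_left i

end Xor

section Quaternion

variable {n α : Type*} [Fintype n] [Ring α] [StarRing α]

lemma conjTranspose_mul_self_fromBlocks_quaternion {A B : Matrix n n α} (hAB : Commute A B)
    (hA : Commute Aᴴ A) (hB : Commute Bᴴ B) :
    (fromBlocks A (-Bᴴ) B Aᴴ)ᴴ * fromBlocks A (-Bᴴ) B Aᴴ =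
      fromBlocks (Aᴴ * A + Bᴴ * B) 0 0 (Aᴴ * A + Bᴴ * B) := by
  have hAB' : Aᴴ * Bᴴ = Bᴴ * Aᴴ := by rw [← conjTranspose_mul, ← hAB.eq, conjTranspose_mul]
  rw [fromBlocks_conjTranspose, fromBlocks_multiply]
  simp only [conjTranspose_neg, conjTranspose_conjTranspose, Matrix.neg_mul, Matrix.mul_neg,
    neg_neg, hAB', hAB.eq, hA.eq, hB.eq, neg_add_cancel, add_comm (B * Bᴴ)]

end Quaternion

section XorCirculant

variable {lam : ℕ}

/-- The dyadic analogue of `Matrix.circulant`: `C(s)` and `D(s)` are of this form. -/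
def xorCirculant (c : Idx lam → ℂ) : Matrix (Idx lam) (Idx lam) ℂ :=
  of fun i j => c (fx i j)

lemma xorCirculant_add (c d : Idx lam → ℂ) :
    xorCirculant (c + d) = xorCirculant c + xorCirculant d :=
  rfl

lemma conjTranspose_xorCirculant (c : Idx lam → ℂ) :
    (xorCirculant c)ᴴ = xorCirculant (star c) := by
  ext i j
  simp [xorCirculant, fx_comm j i]

lemma xorCirculant_mul (c d : Idx lam → ℂ) :
    xorCirculant c * xorCirculant d = xorCirculant (xorCirculant c *ᵥ d) := by
  ext i j
  simp only [xorCirculant, mul_apply, mulVec, dotProduct, of_apply]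
  exact Fintype.sum_equiv (fx_involutive j).toPerm _ _ fun k => by
    simp [fx_comm k j, fx_assoc]

lemma xorCirculant_mulVec_comm (c d : Idx lam → ℂ) :
    xorCirculant c *ᵥ d = xorCirculant d *ᵥ c := by
  ext e
  simp only [xorCirculant, mulVec, dotProduct, of_apply]
  exact Fintype.sum_equiv (fx_involutive e).toPerm _ _ fun k => by simp [mul_comm]

lemma xorCirculant_commute (c d : Idx lam → ℂ) : Commute (xorCirculant c) (xorCirculant d) := by
  rw [Commute, SemiconjBy, xorCirculant_mul, xorCirculant_mul, xorCirculant_mulVec_comm]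

lemma conjTranspose_xorCirculant_commute (c : Idx lam → ℂ) :
    Commute (xorCirculant c)ᴴ (xorCirculant c) := by
  rw [conjTranspose_xorCirculant]
  exact xorCirculant_commute _ _

lemma xorCirculant_eq_smul_one_iff {c : Idx lam → ℂ} {a : ℂ} :
    xorCirculant c = a • 1 ↔ c 0 = a ∧ ∀ e, e ≠ 0 → c e = 0 := by
  constructor
  · intro h
    refine ⟨by simpa [xorCirculant] using congrFun₂ h 0 0, fun e he => ?_⟩
    simpa [xorCirculant, one_apply, Ne.symm he] using congrFun₂ h 0 e
  · rintro ⟨h0, hne⟩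
    ext i j
    by_cases hij : i = j
    · simp [xorCirculant, hij, h0]
    · simp [xorCirculant, hij, hne _ (fx_eq_zero_iff.not.mpr hij)]

end XorCirculant

variable {lam : ℕ}

def xorCorr (s : Idx lam ⊕ Idx lam → ℂ) (e : Idx lam) : ℂ :=
  ∑ m : Idx lam,
    (starRingEnd ℂ (s (Sum.inl m)) * s (Sum.inl (fx m e)) +
      starRingEnd ℂ (s (Sum.inr m)) * s (Sum.inr (fx m e)))

lemma xorCorr_zero (s : Idx lam ⊕ Idx lam → ℂ) :
    xorCorr s 0 = ((∑ i : Idx lam ⊕ Idx lam, ‖s i‖ ^ 2 : ℝ) : ℂ) := by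
  simp only [xorCorr, fx_zero, Complex.conj_mul', Fintype.sum_sum_type, Finset.sum_add_distrib]
  push_cast
  rfl

lemma xorCirculant_xorCorr (s : Idx lam ⊕ Idx lam → ℂ) :
    xorCirculant (xorCorr s) =
      (xorCirculant (s ∘ Sum.inl))ᴴ * xorCirculant (s ∘ Sum.inl) +
        (xorCirculant (s ∘ Sum.inr))ᴴ * xorCirculant (s ∘ Sum.inr) := by
  simp only [conjTranspose_xorCirculant, xorCirculant_mul, xorCirculant_mulVec_comm (star _),
    ← xorCirculant_add]
  congr 1
  ext e
  simp [xorCorr, xorCirculant, mulVec, dotProduct, Finset.sum_add_distrib, fx_comm e, mul_comm]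

lemma Sdes_eq_fromBlocks (s : Idx lam ⊕ Idx lam → ℂ) :
    Sdes s = fromBlocks (xorCirculant (s ∘ Sum.inl)) (-(xorCirculant (s ∘ Sum.inr))ᴴ)
      (xorCirculant (s ∘ Sum.inr)) (xorCirculant (s ∘ Sum.inl))ᴴ := by
  rw [conjTranspose_xorCirculant, conjTranspose_xorCirculant]
  rfl

lemma conjTranspose_Sdes_mul_Sdes (s : Idx lam ⊕ Idx lam → ℂ) :
    (Sdes s)ᴴ * Sdes s =
      fromBlocks (xorCirculant (xorCorr s)) 0 0 (xorCirculant (xorCorr s)) := by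
  rw [Sdes_eq_fromBlocks, xorCirculant_xorCorr]
  exact conjTranspose_mul_self_fromBlocks_quaternion (xorCirculant_commute _ _)
    (conjTranspose_xorCirculant_commute _) (conjTranspose_xorCirculant_commute _)

theorem stmt8_general (lam : ℕ) (s : Idx lam ⊕ Idx lam → ℂ) :
    (Sdes s)ᴴ * Sdes s = ((∑ i : Idx lam ⊕ Idx lam, ‖s i‖ ^ 2 : ℝ) : ℂ) • 1 ↔
      ∀ e : Idx lam, e ≠ 0 →
        ∑ m : Idx lam,
          (starRingEnd ℂ (s (Sum.inl m)) * s (Sum.inl (fx m e)) +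
            starRingEnd ℂ (s (Sum.inr m)) * s (Sum.inr (fx m e))) = 0 := by
  rw [conjTranspose_Sdes_mul_Sdes, ← fromBlocks_one, fromBlocks_smul, fromBlocks_inj]
  simp only [smul_zero, and_self, xorCirculant_eq_smul_one_iff, xorCorr_zero, true_and]
  rfl

/-- `S(s)` is scaled unitary with `S(s)ᴴ S(s) = (Σ_i |s_i|²) I_R` if and
only if for every nonzero `e ∈ {1, ..., M-1}`,
`Σ_{m=0}^{M-1} (conj(s_m) s_{m⊕e} + conj(s_{M+m}) s_{M+(m⊕e)}) = 0`. -/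
theorem stmt8 (lam : ℕ) (hlam : 1 ≤ lam) (s : Idx lam ⊕ Idx lam → ℂ) :
    (Sdes s)ᴴ * Sdes s = ((∑ i : Idx lam ⊕ Idx lam, ‖s i‖ ^ 2 : ℝ) : ℂ) • 1 ↔
      ∀ e : Idx lam, e ≠ 0 →
        ∑ m : Idx lam,
          (starRingEnd ℂ (s (Sum.inl m)) * s (Sum.inl (fx m e)) +
            starRingEnd ℂ (s (Sum.inr m)) * s (Sum.inr (fx m e))) = 0 :=
  stmt8_general lam s

end DDSTC
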